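/- arXiv:2603.26893 — 2 statements merged into one kernel-verified Lean document; each statement's English description precedes it below -/
import Mathlib

section
/- Let E = ((N_t, q_t))_{t∈[m]} be a request sequence with water-filling allocations (x_t)_{t∈[m]}, and let E^(1) = ((N_t \ I_t, q_t))_{t∈[m]}, where I_t = {i ∈ N_t : x_t(i) = 0} is the set of endpoints of inactive edges at online node t. Then WF(E) = WF(E^(1)). -/
open Finset MeasureTheory

/-- A request sequence with `n` offline nodes and `m` online nodes: each online
node `t` has a nonempty neighborhood `N t ⊆ [n]` and a positive quantity `q t`. -/
structure ReqSeq (n m : ℕ) where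
  N : Fin m → Finset (Fin n)
  q : Fin m → ℝ
  N_nonempty : ∀ t, (N t).Nonempty
  q_pos : ∀ t, 0 < q t

/-- `Δ(N, q)`: feasible allocations for a single online node. -/
def allocSet (n : ℕ) (N : Finset (Fin n)) (qt : ℝ) : Set (Fin n → ℝ) :=
  {x | (∀ i, 0 ≤ x i) ∧ (∀ i, i ∉ N → x i = 0) ∧ ∑ i, x i = qt}

/-- A feasible allocation trajectory on a request sequence. -/
def Feasible {n m : ℕ} (E : ReqSeq n m) (x : Fin m → Fin n → ℝ) : Prop :=
  ∀ t, x t ∈ allocSet n (E.N t) (E.q t)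

/-- `Δ(E)`: the Minkowski sum of the per-node allocation sets (feasible load vectors). -/
def loads {n m : ℕ} (E : ReqSeq n m) : Set (Fin n → ℝ) :=
  {ℓ | ∃ x, Feasible E x ∧ ℓ = ∑ t, x t}

/-- Sum of the `k` largest entries of `x`. -/
noncomputable def topSum {n : ℕ} (x : Fin n → ℝ) (k : ℕ) : ℝ :=
  sSup ((fun s : Finset (Fin n) => ∑ i ∈ s, x i) '' {s | s.card = k})

/-- `Majorizes x y` means `x ⪰ y`: equal total sums and every `k`-largest-entries
sum of `x` dominates that of `y`. -/
def Majorizes {n : ℕ} (x y : Fin n → ℝ) : Prop :=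
  (∑ i, x i = ∑ i, y i) ∧ ∀ k ≤ n, topSum y k ≤ topSum x k

/-- `f` is Schur-concave on the nonnegative orthant: `x ⪯ y → f x ≥ f y`. -/
def SchurConcave {n : ℕ} (f : (Fin n → ℝ) → ℝ) : Prop :=
  ∀ x y : Fin n → ℝ, (∀ i, 0 ≤ x i) → (∀ i, 0 ≤ y i) → Majorizes y x → f y ≤ f x

/-- `g` is Schur-convex on the nonnegative orthant: `x ⪯ y → g x ≤ g y`. -/
def SchurConvex {n : ℕ} (g : (Fin n → ℝ) → ℝ) : Prop :=
  ∀ x y : Fin n → ℝ, (∀ i, 0 ≤ x i) → (∀ i, 0 ≤ y i) → Majorizes y x → g x ≤ g y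

/-- Cumulative load strictly before online node `t`. -/
def prevLoad {n m : ℕ} (x : Fin m → Fin n → ℝ) (t : Fin m) : Fin n → ℝ :=
  fun i => ∑ s ∈ Finset.univ.filter (fun s => s < t), x s i

/-- Minimum of `v` over the neighborhood of online node `t`. -/
noncomputable def wfMinOn {n m : ℕ} (E : ReqSeq n m) (t : Fin m) (v : Fin n → ℝ) : ℝ :=
  (E.N t).inf' (E.N_nonempty t) v

/-- `x` is the water-filling allocation trajectory on `E`: at each arrival `t`,
`x t` maximizes the minimum post-allocation load over `N t`. -/
def IsWFAlloc {n m : ℕ} (E : ReqSeq n m) (x : Fin m → Fin n → ℝ) : Prop :=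
  Feasible E x ∧
  ∀ t, ∀ y ∈ allocSet n (E.N t) (E.q t),
    wfMinOn E t (fun i => y i + prevLoad x t i) ≤ wfMinOn E t (fun i => x t i + prevLoad x t i)

-- The load vector produced by water-filling (via choice; the trajectory exists and is unique).
open Classical in
noncomputable def wfLoad {n m : ℕ} (E : ReqSeq n m) : Fin n → ℝ :=
  if h : ∃ x, IsWFAlloc E x then ∑ t, h.choose t else 0

/-- `ℓ` is the majorization-minimal element of `Δ(E)`. -/
def IsOpt {n m : ℕ} (E : ReqSeq n m) (ℓ : Fin n → ℝ) : Prop :=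
  ℓ ∈ loads E ∧ ∀ ℓ' ∈ loads E, Majorizes ℓ' ℓ

-- `OPT(E)`, the majorization-minimal feasible load vector (via choice).
open Classical in
noncomputable def optLoad {n m : ℕ} (E : ReqSeq n m) : Fin n → ℝ :=
  if h : ∃ ℓ, IsOpt E ℓ then h.choose else 0

/-- A request sequence is nested if `N 1 ⊇ N 2 ⊇ ⋯ ⊇ N m`. -/
def IsNested {n m : ℕ} (E : ReqSeq n m) : Prop :=
  ∀ s t : Fin m, s ≤ t → E.N t ⊆ E.N s

/-- `E_{n,m,q}`: request sequences with total quantity `q`. -/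
def seqs (n m : ℕ) (q : ℝ) : Set (ReqSeq n m) := {E | ∑ t, E.q t = q}

/-- The harmonic-series matrix applied to a vector: `(Hℓ)(i) = Σ_{j ≤ i} ℓ(j)/(n − j + 1)`
(in 1-indexed notation). -/
noncomputable def Hvec (n : ℕ) (ℓ : Fin n → ℝ) : Fin n → ℝ :=
  fun i => ∑ j ∈ Finset.univ.filter (fun j => j ≤ i), ℓ j / ((n - (j : ℕ) : ℕ) : ℝ)

/-- The water-filling height of online node `t`: the common post-allocation load of
the offline nodes in the support of `x t`. -/
noncomputable def height {n m : ℕ} (x : Fin m → Fin n → ℝ) (t : Fin m) : ℝ :=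
  sSup {c | ∃ i, 0 < x t i ∧ c = x t i + prevLoad x t i}


/-!
Water-filling raises the lowest levels first, so in a single water-filling step every offline
node that receives a positive amount ends at the minimum level over the neighborhood. On the
support of `x t` the allocation `x t` is therefore perfectly level, and a perfectly level
allocation is the unique water-filling allocation on its own support. Induction over arrival
times then shows that `E` and `E^(1)` see the same previous loads and make the same allocations.
-/

section WaterFilling

variable {n : ℕ}

def IsWaterFillStep (N : Finset (Fin n)) (hN : N.Nonempty) (q : ℝ) (ℓ x : Fin n → ℝ) : Prop :=
  x ∈ allocSet n N q ∧
    ∀ y ∈ allocSet n N q, N.inf' hN (fun i => y i + ℓ i) ≤ N.inf' hN (fun i => x i + ℓ i)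

theorem IsWFAlloc.isWaterFillStep {m : ℕ} {E : ReqSeq n m} {x : Fin m → Fin n → ℝ}
    (hx : IsWFAlloc E x) (t : Fin m) :
    IsWaterFillStep (E.N t) (E.N_nonempty t) (E.q t) (prevLoad x t) (x t) :=
  ⟨hx.1 t, hx.2 t⟩

theorem prevLoad_congr {m : ℕ} {x y : Fin m → Fin n → ℝ} {t : Fin m}
    (h : ∀ s < t, x s = y s) : prevLoad x t = prevLoad y t := by
  funext i
  exact sum_congr rfl fun s hs => by rw [h s (mem_filter.1 hs).2]

theorem mem_allocSet_filter_ne_zero {N : Finset (Fin n)} {q : ℝ} {x : Fin n → ℝ}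
    (hx : x ∈ allocSet n N q) : x ∈ allocSet n (N.filter (x · ≠ 0)) q := by
  obtain ⟨hnn, hz, hs⟩ := hx
  refine ⟨hnn, fun i hi => ?_, hs⟩
  by_contra h
  exact hi (mem_filter.2 ⟨by_contra fun hiN => h (hz i hiN), h⟩)

namespace IsWaterFillStep

variable {N : Finset (Fin n)} {hN : N.Nonempty} {q : ℝ} {ℓ x : Fin n → ℝ}

theorem add_eq_inf'_of_pos (hx : IsWaterFillStep N hN q ℓ x) {j : Fin n} (hj : j ∈ N)
    (hxj : 0 < x j) : x j + ℓ j = N.inf' hN (fun i => x i + ℓ i) := by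
  obtain ⟨⟨hnn, hz, hs⟩, hopt⟩ := hx
  set v := N.inf' hN (fun i => x i + ℓ i)
  refine le_antisymm ?_ (inf'_le _ hj)
  by_contra! hgap
  -- Take `ε` from `j` and spread it evenly over `N`: every level on `N` then ends above `v`.
  set ε := min (x j) ((x j + ℓ j - v) / 2)
  have hε : 0 < ε := lt_min hxj (by linarith)
  have hεx : ε ≤ x j := min_le_left _ _
  have hεgap : ε ≤ (x j + ℓ j - v) / 2 := min_le_right _ _
  set k : ℝ := (N.card : ℝ)
  have hk : 0 < k := Nat.cast_pos.2 hN.card_pos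
  have hεk : 0 < ε / k := div_pos hε hk
  set y : Fin n → ℝ := fun i => x i - (if i = j then ε else 0) + (if i ∈ N then ε / k else 0)
  have hy : y ∈ allocSet n N q := by
    refine ⟨fun i => ?_, fun i hi => ?_, ?_⟩
    · have := hnn i
      simp only [y]
      split_ifs with h <;> (try subst h) <;> linarith
    · have hij : i ≠ j := fun h => hi (h ▸ hj)
      simp [y, hij, hi, hz i hi]
    · simp only [y, sum_add_distrib, sum_sub_distrib, sum_ite_eq', mem_univ, if_true,
        sum_ite_mem, univ_inter, sum_const, nsmul_eq_mul, hs]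
      field_simp
      ring
  have hlevel : v < N.inf' hN (fun i => y i + ℓ i) := by
    refine (lt_inf'_iff _).2 fun i hi => ?_
    by_cases hij : i = j
    · subst hij
      simp only [y, if_true, hi]
      linarith
    · have : v ≤ x i + ℓ i := inf'_le _ hi
      simp only [y, hij, hi, if_true, if_false]
      linarith
  exact (hopt y hy).not_gt hlevel

theorem eq_of_add_eq_const (hx : IsWaterFillStep N hN q ℓ x) {y : Fin n → ℝ} {c : ℝ}
    (hy : y ∈ allocSet n N q) (hc : ∀ i ∈ N, y i + ℓ i = c) : x = y := by
  obtain ⟨⟨-, hz, hs⟩, hopt⟩ := hx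
  have hle : ∀ i, y i ≤ x i := by
    intro i
    by_cases hi : i ∈ N
    · have := calc y i + ℓ i = c := hc i hi
          _ ≤ N.inf' hN (fun i => y i + ℓ i) := le_inf' _ _ fun i hi => (hc i hi).ge
          _ ≤ N.inf' hN (fun i => x i + ℓ i) := hopt y hy
          _ ≤ x i + ℓ i := inf'_le _ hi
      linarith
    · rw [hy.2.1 i hi, hz i hi]
  funext i
  exact ((sum_eq_sum_iff_of_le fun i _ => hle i).1 (hy.2.2.trans hs.symm) i (mem_univ i)).symm

theorem eq_of_restrict_support (hx : IsWaterFillStep N hN q ℓ x) {N' : Finset (Fin n)}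
    {hN' : N'.Nonempty} {x' : Fin n → ℝ} (hN'eq : N' = N.filter (x · ≠ 0))
    (hx' : IsWaterFillStep N' hN' q ℓ x') : x' = x := by
  refine hx'.eq_of_add_eq_const (c := N.inf' hN fun i => x i + ℓ i)
    (hN'eq ▸ mem_allocSet_filter_ne_zero hx.1) fun i hi => ?_
  rw [hN'eq, mem_filter] at hi
  exact hx.add_eq_inf'_of_pos hi.1 ((hx.1.1 i).lt_of_ne (Ne.symm hi.2))

end IsWaterFillStep

end WaterFilling

/-- **Proposition (Invariance under Inactive Edge Removal).** If `E^(1)` is obtained from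
`E` by removing, at every online node `t`, the endpoints of edges that are inactive under
the water-filling allocation `x` of `E`, then `WF(E) = WF(E^(1))`. -/
theorem inactive_edge_removal (n m : ℕ) (E E1 : ReqSeq n m)
    (x : Fin m → Fin n → ℝ) (hx : IsWFAlloc E x)
    (hN : ∀ t, E1.N t = (E.N t).filter (fun i => x t i ≠ 0))
    (hq : ∀ t, E1.q t = E.q t)
    (x1 : Fin m → Fin n → ℝ) (hx1 : IsWFAlloc E1 x1) :
    ∑ t, x t = ∑ t, x1 t := by
  have hstep : ∀ t, x1 t = x t := by
    intro t
    induction t using WellFoundedLT.induction with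
    | _ t ih =>
      have h1 := hx1.isWaterFillStep t
      rw [hq t, prevLoad_congr ih] at h1
      exact (hx.isWaterFillStep t).eq_of_restrict_support (hN t) h1
  exact sum_congr rfl fun t _ => (hstep t).symm
end

section
/- Let E ∈ E_{n,m,q} be a request sequence that, under its water-filling allocation, has no inactive edges and whose online nodes arrive in non-decreasing order of water-filling height (h_1 ≤ h_2 ≤ ⋯ ≤ h_m). Then the nested sequence Ê induced by E satisfies WF(E) ⪯ WF(Ê). -/
open Finset MeasureTheory

/-!
With every edge active, each arrival lifts all its neighbours to the common height `h_t`, so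
offline node `i` ends at `h_{μ_i} = ∑_{ρ ≤ μ_i} δ_ρ`, where `δ_ρ = h_ρ - h_{ρ-1} ≥ 0`; hence any
`k` offline nodes carry at most `∑_ρ min(k, |N̂_ρ|) δ_ρ`. On the nested sequence water-filling
spreads `q_t` evenly over `N̂_t`, and a `k`-set comparable with every `N̂_t` collects
`∑_t min(k, |N̂_t|) / |N̂_t| · q_t`. Abel summation against the increasing weights
`min(k, |N̂_t|) / |N̂_t|` compares the two, once we know the suffix bounds
`∑_{ρ ≥ τ} |N̂_ρ| δ_ρ ≤ ∑_{t ≥ τ} q_t`: from arrival `τ` on, every node of `N̂_τ` must be raised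
from a load of at most `h_{τ-1}` to its final height.
-/

theorem Finset.sum_mul_le_sum_mul_of_sum_filter_le {ι R : Type*} [LinearOrder ι]
    [CommRing R] [PartialOrder R] [IsOrderedRing R] (s : Finset ι) {w f g : ι → R}
    (hw : MonotoneOn w s) (hw₀ : ∀ t ∈ s, 0 ≤ w t)
    (hfg : ∀ τ ∈ s, ∑ t ∈ s with τ ≤ t, f t ≤ ∑ t ∈ s with τ ≤ t, g t) :
    ∑ t ∈ s, w t * f t ≤ ∑ t ∈ s, w t * g t := by
  classical
  induction s using Finset.induction_on_min generalizing w with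
  | empty => simp
  | insert a s ha ih =>
    have hs : ∀ τ ∈ s, ∀ h : ι → R,
        ∑ t ∈ insert a s with τ ≤ t, h t = ∑ t ∈ s with τ ≤ t, h t := fun τ hτ h => by
      rw [filter_insert, if_neg (ha τ hτ).not_ge]
    have hsplit : ∀ h : ι → R, ∑ t ∈ insert a s, w t * h t
        = w a * ∑ t ∈ insert a s, h t + ∑ t ∈ s, (w t - w a) * h t := fun h => by
      rw [mul_sum, sum_insert (fun h => (ha a h).false), sum_insert (fun h => (ha a h).false)]
      simp only [sub_mul, sum_sub_distrib]
      ring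
    have hall : ∑ t ∈ insert a s with a ≤ t, f t ≤ ∑ t ∈ insert a s with a ≤ t, g t :=
      hfg a (mem_insert_self a s)
    rw [filter_true_of_mem fun t ht => (mem_insert.1 ht).elim ge_of_eq (fun h => (ha t h).le)]
      at hall
    rw [hsplit f, hsplit g]
    gcongr ?_ + ?_
    · exact mul_le_mul_of_nonneg_left hall (hw₀ a (mem_insert_self a s))
    · refine ih (fun t ht u hu htu => sub_le_sub_right ?_ _) (fun t ht => ?_) fun τ hτ => ?_
      · exact hw (mem_insert_of_mem ht) (mem_insert_of_mem hu) htu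
      · exact sub_nonneg.2 (hw (mem_insert_self a s) (mem_insert_of_mem ht) (ha t ht).le)
      · rw [← hs τ hτ, ← hs τ hτ]; exact hfg τ (mem_insert_of_mem hτ)

/-- Squeeze `s` between the largest member of size `≤ k` and the smallest member of size `≥ k`
of the chain extended by `∅` and `univ`. -/
theorem Finset.exists_card_eq_forall_subset_or_superset {α : Type*} [Fintype α] [DecidableEq α]
    {𝒞 : Finset (Finset α)} (h𝒞 : IsChain (· ⊆ ·) (𝒞 : Set (Finset α))) {k : ℕ}
    (hk : k ≤ Fintype.card α) : ∃ s : Finset α, #s = k ∧ ∀ A ∈ 𝒞, A ⊆ s ∨ s ⊆ A := by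
  set 𝒟 := insert ∅ (insert univ 𝒞)
  have h𝒟 : IsChain (· ⊆ ·) (𝒟 : Set (Finset α)) := by
    simp only [𝒟, coe_insert]
    exact (h𝒞.insert fun _ _ _ => Or.inr (subset_univ _)).insert
      fun _ _ _ => Or.inl (empty_subset _)
  have hsub : ∀ A ∈ 𝒟, ∀ B ∈ 𝒟, #A ≤ #B → A ⊆ B := fun A hA B hB hAB => by
    rcases h𝒟.total hA hB with h | h
    · exact h
    · exact (eq_of_subset_of_card_le h hAB).ge
  obtain ⟨B, hB, hBmax⟩ := exists_max_image (𝒟.filter (#· ≤ k)) card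
    ⟨∅, mem_filter.2 ⟨mem_insert_self _ _, by simp⟩⟩
  obtain ⟨C, hC, hCmin⟩ := exists_min_image (𝒟.filter (k ≤ #·)) card
    ⟨univ, mem_filter.2 ⟨mem_insert_of_mem (mem_insert_self _ _), by simpa using hk⟩⟩
  rw [mem_filter] at hB hC
  obtain ⟨s, hBs, hsC, hs⟩ :=
    exists_subsuperset_card_eq (hsub B hB.1 C hC.1 (hB.2.trans hC.2)) hB.2 hC.2
  refine ⟨s, hs, fun A hA => ?_⟩
  have hA' : A ∈ 𝒟 := mem_insert_of_mem (mem_insert_of_mem hA)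
  rcases le_total #A k with h | h
  · exact Or.inl ((hsub A hA' B hB.1 (hBmax A (mem_filter.2 ⟨hA', h⟩))).trans hBs)
  · exact Or.inr (hsC.trans (hsub C hC.1 A hA' (hCmin A (mem_filter.2 ⟨hA', h⟩))))

theorem Finset.card_inter_eq_min_of_subset_or_superset {α : Type*} [DecidableEq α]
    {s A : Finset α} (h : A ⊆ s ∨ s ⊆ A) : #(s ∩ A) = min #s #A := by
  rcases h with h | h
  · rw [inter_eq_right.2 h, min_eq_right (card_le_card h)]
  · rw [inter_eq_left.2 h, min_eq_left (card_le_card h)]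

theorem cast_min_div_le_cast_min_div {k a b : ℕ} (ha : 0 < a) (hab : a ≤ b) :
    ((min k b : ℕ) : ℝ) / b ≤ ((min k a : ℕ) : ℝ) / a := by
  have hb : 0 < b := ha.trans_le hab
  rw [div_le_div_iff₀ (by exact_mod_cast hb) (by exact_mod_cast ha)]
  norm_cast
  rcases le_total k a with h | h
  · rw [min_eq_left h, min_eq_left (h.trans hab)]
    exact Nat.mul_le_mul_left k hab
  · rw [min_eq_right h, mul_comm]
    exact Nat.mul_le_mul_left a (min_le_right k b)

section TopSum

variable {n : ℕ} {x : Fin n → ℝ} {k : ℕ}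

theorem sum_le_topSum {s : Finset (Fin n)} (hs : #s = k) : ∑ i ∈ s, x i ≤ topSum x k :=
  le_csSup ((Set.toFinite _).image _).bddAbove ⟨s, hs, rfl⟩

theorem topSum_le {b : ℝ} (hk : k ≤ n) (h : ∀ s : Finset (Fin n), #s = k → ∑ i ∈ s, x i ≤ b) :
    topSum x k ≤ b := by
  obtain ⟨s, -, hs⟩ := exists_subset_card_eq (s := (univ : Finset (Fin n))) (by simpa using hk)
  exact csSup_le ⟨_, s, hs, rfl⟩ (by rintro _ ⟨s, hs, rfl⟩; exact h s hs)

end TopSum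

namespace ReqSeq

variable {n m : ℕ}

/-- The neighbourhoods `N̂_t = {i : t ≤ μ_i}` of the nested sequence induced by `E`. -/
def nestedN (E : ReqSeq n m) (t : Fin m) : Finset (Fin n) :=
  {i | ∃ s, t ≤ s ∧ i ∈ E.N s}

theorem mem_nestedN {E : ReqSeq n m} {t : Fin m} {i : Fin n} :
    i ∈ E.nestedN t ↔ ∃ s, t ≤ s ∧ i ∈ E.N s := by
  simp [nestedN]

theorem nestedN_anti (E : ReqSeq n m) {s t : Fin m} (hst : s ≤ t) : E.nestedN t ⊆ E.nestedN s :=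
  fun _ hi => by
    obtain ⟨r, htr, hr⟩ := mem_nestedN.1 hi
    exact mem_nestedN.2 ⟨r, hst.trans htr, hr⟩

theorem N_subset_nestedN (E : ReqSeq n m) (t : Fin m) : E.N t ⊆ E.nestedN t :=
  fun _ hi => mem_nestedN.2 ⟨t, le_rfl, hi⟩

end ReqSeq

section WaterFilling

variable {n m : ℕ} {E : ReqSeq n m} {x : Fin m → Fin n → ℝ}

theorem Feasible.sum_mem_N (hx : Feasible E x) (t : Fin m) : ∑ i ∈ E.N t, x t i = E.q t := by
  rw [← (hx t).2.2]
  exact sum_subset (subset_univ _) fun i _ hi => (hx t).2.1 i hi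

theorem Feasible.sum_sum_apply (hx : Feasible E x) : ∑ i, (∑ t, x t) i = ∑ t, E.q t := by
  simp only [Finset.sum_apply]
  rw [sum_comm]
  exact sum_congr rfl fun t _ => (hx t).2.2

theorem Feasible.mem_N_of_pos (hx : Feasible E x) {t : Fin m} {i : Fin n} (hi : 0 < x t i) :
    i ∈ E.N t := by
  by_contra h
  exact hi.ne' ((hx t).2.1 i h)

/-- Were `j` above the minimum, moving a little of `x t j` evenly onto all of `N t` would raise
the minimum. -/
theorem IsWFAlloc.add_prevLoad_eq_wfMinOn (hx : IsWFAlloc E x) {t : Fin m} {j : Fin n}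
    (hpos : 0 < x t j) :
    x t j + prevLoad x t j = wfMinOn E t fun i => x t i + prevLoad x t i := by
  set g : Fin n → ℝ := fun i => x t i + prevLoad x t i
  have hj := hx.1.mem_N_of_pos hpos
  refine le_antisymm ?_ (inf'_le g hj)
  by_contra! hlt
  set I := wfMinOn E t g
  have hc : (0 : ℝ) < #(E.N t) := by exact_mod_cast card_pos.2 (E.N_nonempty t)
  set ε := min (x t j) ((g j - I) / 2)
  have hε : 0 < ε := lt_min hpos (by linarith)
  have hεx : ε ≤ x t j := min_le_left _ _
  have hεg : ε ≤ (g j - I) / 2 := min_le_right _ _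
  set y : Fin n → ℝ := fun i =>
    x t i - (if i = j then ε else 0) + (if i ∈ E.N t then ε / #(E.N t) else 0)
  have hy : y ∈ allocSet n (E.N t) (E.q t) := by
    refine ⟨fun i => ?_, fun i hi => ?_, ?_⟩
    · have := (hx.1 t).1 i
      have : 0 ≤ ε / #(E.N t) := by positivity
      simp only [y]
      split_ifs with h <;> subst_vars <;> linarith
    · simp only [y, (hx.1 t).2.1 i hi, if_neg hi, if_neg (ne_of_mem_of_not_mem hj hi).symm]
      ring
    · simp only [y, sum_add_distrib, sum_sub_distrib, sum_ite_eq', mem_univ, if_true,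
        sum_ite_mem, univ_inter, sum_const, nsmul_eq_mul, (hx.1 t).2.2]
      field_simp
      ring
  refine (hx.2 t y hy).not_gt ((lt_inf'_iff _).2 fun i hi => ?_)
  have hIi : I ≤ g i := inf'_le g hi
  have : 0 < ε / #(E.N t) := by positivity
  simp only [y, if_pos hi]
  split_ifs with h
  · subst h; simp only [g] at hIi hεg ⊢; linarith
  · simp only [g] at hIi; linarith

theorem IsWFAlloc.height_eq (hx : IsWFAlloc E x) {t : Fin m} {j : Fin n} (hpos : 0 < x t j) :
    height x t = x t j + prevLoad x t j := by
  have hset : {c | ∃ i, 0 < x t i ∧ c = x t i + prevLoad x t i}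
      = {x t j + prevLoad x t j} := by
    ext c
    simp only [Set.mem_ofPred_eq, Set.mem_singleton_iff]
    constructor
    · rintro ⟨i, hi, rfl⟩
      rw [hx.add_prevLoad_eq_wfMinOn hi, hx.add_prevLoad_eq_wfMinOn hpos]
    · rintro rfl
      exact ⟨j, hpos, rfl⟩
  rw [height, hset, csSup_singleton]

theorem IsWFAlloc.height_nonneg (hx : IsWFAlloc E x) (t : Fin m) : 0 ≤ height x t := by
  obtain ⟨j, -, hj⟩ : ∃ j ∈ univ, (0 : Fin n → ℝ) j < x t j :=
    exists_lt_of_sum_lt (by simpa [(hx.1 t).2.2] using E.q_pos t)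
  rw [hx.height_eq hj]
  exact add_nonneg hj.le (sum_nonneg fun s _ => (hx.1 s).1 j)

end WaterFilling

section Levels

variable {n m : ℕ} {E : ReqSeq n m} {x : Fin m → Fin n → ℝ}

/-- `waterLevel x t.castSucc = h_{t-1}` (with `h_{-1} = 0`) and `waterLevel x t.succ = h_t`. -/
noncomputable def waterLevel (x : Fin m → Fin n → ℝ) : Fin (m + 1) → ℝ :=
  Fin.cons 0 (height x)

noncomputable def heightIncr (x : Fin m → Fin n → ℝ) (t : Fin m) : ℝ :=
  waterLevel x t.succ - waterLevel x t.castSucc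

theorem waterLevel_mono (hx : IsWFAlloc E x) (hmono : Monotone (height x)) :
    Monotone (waterLevel x) := by
  intro a b hab
  induction b using Fin.cases with
  | zero => rw [le_antisymm hab (Fin.zero_le a)]
  | succ b =>
    induction a using Fin.cases with
    | zero => simpa [waterLevel] using hx.height_nonneg b
    | succ a => simpa [waterLevel] using hmono (Fin.succ_le_succ_iff.1 hab)

theorem heightIncr_nonneg (hx : IsWFAlloc E x) (hmono : Monotone (height x)) (t : Fin m) :
    0 ≤ heightIncr x t :=
  sub_nonneg.2 (waterLevel_mono hx hmono (Fin.castSucc_le_succ t))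

theorem exists_last_visit (E : ReqSeq n m) (i : Fin n) {S : Finset (Fin m)}
    (h : ∃ s ∈ S, i ∈ E.N s) : ∃ p ∈ S, i ∈ E.N p ∧ ∀ s ∈ S, i ∈ E.N s → s ≤ p := by
  obtain ⟨p, hp, hmax⟩ := exists_max_image (S.filter (i ∈ E.N ·)) id (by simpa [Finset.Nonempty])
  rw [mem_filter] at hp
  exact ⟨p, hp.1, hp.2, fun s hs hi => hmax s (mem_filter.2 ⟨hs, hi⟩)⟩

variable (hx : IsWFAlloc E x) (hactive : ∀ t, ∀ i ∈ E.N t, 0 < x t i)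
include hx hactive

/-- With every edge active, each visit lifts `i` to the current water level. -/
theorem sum_alloc_eq_height_of_last {S : Finset (Fin m)} {p : Fin m} {i : Fin n}
    (hpS : Iic p ⊆ S) (hp : i ∈ E.N p) (hlast : ∀ s ∈ S, i ∈ E.N s → s ≤ p) :
    ∑ s ∈ S, x s i = height x p := by
  rw [hx.height_eq (hactive p i hp), ← sum_subset hpS, ← Iio_insert, sum_insert (by simp),
    prevLoad, filter_gt_eq_Iio]
  intro s hs hsp
  exact (hx.1 s).2.1 i fun hi => hsp (mem_Iic.2 (hlast s hs hi))

theorem prevLoad_le_waterLevel (hmono : Monotone (height x)) (τ : Fin m) (i : Fin n) :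
    prevLoad x τ i ≤ waterLevel x τ.castSucc := by
  by_cases h : ∃ s ∈ univ.filter (· < τ), i ∈ E.N s
  · obtain ⟨p, hpτ, hp, hlast⟩ := exists_last_visit E i h
    rw [mem_filter] at hpτ
    rw [prevLoad, sum_alloc_eq_height_of_last hx hactive
      (fun s hs => mem_filter.2 ⟨mem_univ _, (mem_Iic.1 hs).trans_lt hpτ.2⟩) hp hlast,
      show height x p = waterLevel x p.succ from rfl]
    exact waterLevel_mono hx hmono (Fin.succ_le_castSucc_iff.2 hpτ.2)
  · rw [prevLoad, sum_eq_zero fun s hs => (hx.1 s).2.1 i fun hi => h ⟨s, hs, hi⟩]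
    exact waterLevel_mono hx hmono (Fin.zero_le _)

theorem sum_alloc_eq_sum_heightIncr (i : Fin n) :
    ∑ t, x t i = ∑ ρ with i ∈ E.nestedN ρ, heightIncr x ρ := by
  by_cases h : ∃ s ∈ univ, i ∈ E.N s
  · obtain ⟨μ, -, hμ, hlast⟩ := exists_last_visit E i h
    have hfilter : ({ρ | i ∈ E.nestedN ρ} : Finset (Fin m)) = Iic μ := by
      ext ρ
      simp only [mem_filter, mem_univ, true_and, mem_Iic, ReqSeq.mem_nestedN]
      exact ⟨fun ⟨s, hρs, hs⟩ => hρs.trans (hlast s (mem_univ s) hs), fun h => ⟨μ, h, hμ⟩⟩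
    simp only [hfilter, heightIncr]
    rw [Fin.sum_Iic_sub, sum_alloc_eq_height_of_last hx hactive (subset_univ _) hμ hlast]
    simp [waterLevel]
  · push Not at h
    rw [sum_eq_zero fun t _ => (hx.1 t).2.1 i (h t (mem_univ t))]
    refine (sum_eq_zero fun ρ hρ => ?_).symm
    obtain ⟨s, -, hs⟩ := ReqSeq.mem_nestedN.1 (mem_filter.1 hρ).2
    exact absurd hs (h s (mem_univ s))

theorem sum_filter_heightIncr_le (hmono : Monotone (height x)) (τ : Fin m) (i : Fin n) :
    ∑ ρ with τ ≤ ρ ∧ i ∈ E.nestedN ρ, heightIncr x ρ ≤ ∑ t with τ ≤ t, x t i := by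
  by_cases h : ∃ s ∈ univ.filter (τ ≤ ·), i ∈ E.N s
  · obtain ⟨μ, hτμ, hμ, hlast⟩ := exists_last_visit E i h
    rw [mem_filter] at hτμ
    have hlast' : ∀ s ∈ univ, i ∈ E.N s → s ≤ μ := fun s _ hs =>
      (le_total τ s).elim (fun hτs => hlast s (mem_filter.2 ⟨mem_univ s, hτs⟩) hs)
        fun hsτ => hsτ.trans hτμ.2
    have hfilter : ({ρ | τ ≤ ρ ∧ i ∈ E.nestedN ρ} : Finset (Fin m)) = Icc τ μ := by
      ext ρ
      simp only [mem_filter, mem_univ, true_and, mem_Icc, ReqSeq.mem_nestedN]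
      exact ⟨fun ⟨hτρ, s, hρs, hs⟩ => ⟨hτρ, hρs.trans (hlast' s (mem_univ s) hs)⟩,
        fun ⟨hτρ, hρμ⟩ => ⟨hτρ, μ, hρμ, hμ⟩⟩
    have htotal := sum_alloc_eq_height_of_last hx hactive (subset_univ _) hμ hlast'
    rw [← sum_filter_add_sum_filter_not univ (τ ≤ ·)] at htotal
    simp only [not_le, filter_gt_eq_Iio] at htotal
    have hprev := prevLoad_le_waterLevel hx hactive hmono τ i
    rw [prevLoad, filter_gt_eq_Iio] at hprev
    simp only [hfilter, heightIncr]
    rw [Fin.sum_Icc_sub hτμ.2]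
    simp only [waterLevel, Fin.cons_succ] at hprev ⊢
    linarith
  · refine (sum_eq_zero fun ρ hρ => ?_).trans_le (sum_nonneg fun t _ => (hx.1 t).1 i)
    obtain ⟨hτρ, hiρ⟩ := (mem_filter.1 hρ).2
    obtain ⟨s, hρs, hs⟩ := ReqSeq.mem_nestedN.1 hiρ
    exact absurd ⟨s, mem_filter.2 ⟨mem_univ s, hτρ.trans hρs⟩, hs⟩ h

theorem sum_load_le_sum_min_mul_heightIncr (hmono : Monotone (height x))
    (s : Finset (Fin n)) :
    ∑ i ∈ s, (∑ t, x t) i ≤ ∑ ρ, ((min #s #(E.nestedN ρ) : ℕ) : ℝ) * heightIncr x ρ := by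
  calc ∑ i ∈ s, (∑ t, x t) i = ∑ ρ, (#(s ∩ E.nestedN ρ) : ℝ) * heightIncr x ρ := by
        simp only [Finset.sum_apply, sum_alloc_eq_sum_heightIncr hx hactive, sum_filter]
        rw [sum_comm]
        simp only [sum_ite_mem, sum_const, nsmul_eq_mul]
    _ ≤ _ := by
      gcongr with ρ
      · exact heightIncr_nonneg hx hmono ρ
      · exact le_min (card_le_card inter_subset_left) (card_le_card inter_subset_right)

theorem sum_card_nestedN_mul_heightIncr_le (hmono : Monotone (height x)) (τ : Fin m) :
    ∑ ρ with τ ≤ ρ, (#(E.nestedN ρ) : ℝ) * heightIncr x ρ ≤ ∑ t with τ ≤ t, E.q t := by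
  calc ∑ ρ with τ ≤ ρ, (#(E.nestedN ρ) : ℝ) * heightIncr x ρ
        = ∑ i, ∑ ρ with τ ≤ ρ ∧ i ∈ E.nestedN ρ, heightIncr x ρ := by
        simp only [← filter_filter, sum_filter (p := fun ρ => _ ∈ E.nestedN ρ)]
        rw [sum_comm]
        simp only [← sum_filter, filter_mem_eq_inter, univ_inter, sum_const, nsmul_eq_mul]
    _ ≤ ∑ i, ∑ t with τ ≤ t, x t i :=
        sum_le_sum fun i _ => sum_filter_heightIncr_le hx hactive hmono τ i
    _ = ∑ t with τ ≤ t, E.q t := by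
        rw [sum_comm]
        exact sum_congr rfl fun t _ => (hx.1 t).2.2

theorem sum_min_mul_heightIncr_le (hmono : Monotone (height x)) (k : ℕ) :
    ∑ ρ, ((min k #(E.nestedN ρ) : ℕ) : ℝ) * heightIncr x ρ
      ≤ ∑ t, ((min k #(E.nestedN t) : ℕ) : ℝ) / #(E.nestedN t) * E.q t := by
  have hcard : ∀ t, 0 < #(E.nestedN t) := fun t =>
    card_pos.2 ((E.N_nonempty t).mono (E.N_subset_nestedN t))
  calc ∑ ρ, ((min k #(E.nestedN ρ) : ℕ) : ℝ) * heightIncr x ρ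
        = ∑ ρ, ((min k #(E.nestedN ρ) : ℕ) : ℝ) / #(E.nestedN ρ)
            * (#(E.nestedN ρ) * heightIncr x ρ) := by
        refine sum_congr rfl fun ρ _ => ?_
        have : (#(E.nestedN ρ) : ℝ) ≠ 0 := by exact_mod_cast (hcard ρ).ne'
        field_simp
    _ ≤ _ := by
        refine sum_mul_le_sum_mul_of_sum_filter_le univ (fun a _ b _ hab => ?_)
          (fun t _ => by positivity) fun τ _ => ?_
        · exact cast_min_div_le_cast_min_div (hcard b) (card_le_card (E.nestedN_anti hab))
        · exact sum_card_nestedN_mul_heightIncr_le hx hactive hmono τ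

end Levels

section Nested

variable {n m : ℕ} {E : ReqSeq n m} {x : Fin m → Fin n → ℝ}

theorem IsWFAlloc.apply_eq_of_prevLoad_eq (hx : IsWFAlloc E x) {t : Fin m} {c : ℝ}
    (hc : ∀ i ∈ E.N t, prevLoad x t i = c) (i : Fin n) :
    x t i = if i ∈ E.N t then E.q t / #(E.N t) else 0 := by
  have hcard : (0 : ℝ) < #(E.N t) := by exact_mod_cast card_pos.2 (E.N_nonempty t)
  set u : Fin n → ℝ := fun i => if i ∈ E.N t then E.q t / #(E.N t) else 0
  have hu : u ∈ allocSet n (E.N t) (E.q t) := by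
    refine ⟨fun i => ?_, fun i hi => if_neg hi, ?_⟩
    · have := (E.q_pos t).le
      simp only [u]
      split_ifs <;> positivity
    · simp only [u, sum_ite_mem, univ_inter, sum_const, nsmul_eq_mul]
      field_simp
  have hge : ∀ j ∈ E.N t, E.q t / #(E.N t) ≤ x t j := fun j hj => by
    have hmin : E.q t / #(E.N t) + c ≤ wfMinOn E t fun i => u i + prevLoad x t i :=
      le_inf' _ _ fun i hi => by simp [u, hi, hc i hi]
    have := (hmin.trans (hx.2 t u hu)).trans (inf'_le _ hj)
    simp only [hc j hj] at this
    linarith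
  have heq := (sum_eq_sum_iff_of_le hge).1 <| by
    rw [hx.1.sum_mem_N, sum_const, nsmul_eq_mul]
    field_simp
  split_ifs with hi
  · exact (heq i hi).symm
  · exact (hx.1 t).2.1 i hi

theorem IsWFAlloc.apply_eq_of_isNested (hx : IsWFAlloc E x) (hnest : IsNested E) (t : Fin m)
    (i : Fin n) : x t i = if i ∈ E.N t then E.q t / #(E.N t) else 0 := by
  induction t using WellFoundedLT.induction generalizing i with
  | ind t ih =>
    refine hx.apply_eq_of_prevLoad_eq (c := ∑ s with s < t, E.q s / #(E.N s))
      (fun j hj => sum_congr rfl fun s hs => ?_) i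
    rw [mem_filter] at hs
    rw [ih s hs.2 j, if_pos (hnest s t hs.2.le hj)]

theorem IsWFAlloc.exists_sum_load_eq (hx : IsWFAlloc E x) (hnest : IsNested E) {k : ℕ}
    (hk : k ≤ n) : ∃ s : Finset (Fin n), #s = k ∧
      ∑ i ∈ s, (∑ t, x t) i = ∑ t, ((min k #(E.N t) : ℕ) : ℝ) / #(E.N t) * E.q t := by
  have hchain : IsChain (· ⊆ ·) ((univ.image E.N : Finset _) : Set (Finset (Fin n))) := by
    rintro _ hA _ hB -
    simp only [coe_image, coe_univ, Set.image_univ, Set.mem_range] at hA hB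
    obtain ⟨s, rfl⟩ := hA
    obtain ⟨t, rfl⟩ := hB
    exact (le_total t s).imp (hnest t s) (hnest s t)
  obtain ⟨s, hs, hcomp⟩ := exists_card_eq_forall_subset_or_superset hchain (by simpa using hk)
  refine ⟨s, hs, ?_⟩
  simp only [Finset.sum_apply]
  rw [sum_comm]
  refine sum_congr rfl fun t _ => ?_
  simp only [hx.apply_eq_of_isNested hnest t, sum_ite_mem, sum_const, nsmul_eq_mul]
  rw [card_inter_eq_min_of_subset_or_superset (hcomp _ (mem_image_of_mem _ (mem_univ t))), hs]
  ring

end Nested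

theorem nestification_general (n m : ℕ) (E : ReqSeq n m)
    (x : Fin m → Fin n → ℝ) (hx : IsWFAlloc E x)
    (hactive : ∀ t, ∀ i ∈ E.N t, 0 < x t i)
    (hheights : ∀ t s : Fin m, t ≤ s → height x t ≤ height x s)
    (Ehat : ReqSeq n m)
    (hN : ∀ (t : Fin m) (i : Fin n), i ∈ Ehat.N t ↔ ∃ s : Fin m, t ≤ s ∧ i ∈ E.N s)
    (hq : ∀ t, Ehat.q t = E.q t)
    (xhat : Fin m → Fin n → ℝ) (hxhat : IsWFAlloc Ehat xhat) :
    Majorizes (∑ t, xhat t) (∑ t, x t) := by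
  have hmono : Monotone (height x) := fun t s => hheights t s
  have hNhat : Ehat.N = E.nestedN := funext fun t => ext fun i => by rw [hN, ReqSeq.mem_nestedN]
  have hnest : IsNested Ehat := fun s t hst => hNhat ▸ E.nestedN_anti hst
  refine ⟨by simp only [hxhat.1.sum_sum_apply, hx.1.sum_sum_apply, hq], fun k hk => ?_⟩
  obtain ⟨shat, hcard, hshat⟩ := hxhat.exists_sum_load_eq hnest hk
  refine topSum_le hk fun s hs => ?_
  calc ∑ i ∈ s, (∑ t, x t) i
      ≤ ∑ ρ, ((min k #(E.nestedN ρ) : ℕ) : ℝ) * heightIncr x ρ :=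
        hs ▸ sum_load_le_sum_min_mul_heightIncr hx hactive hmono s
    _ ≤ ∑ t, ((min k #(E.nestedN t) : ℕ) : ℝ) / #(E.nestedN t) * E.q t :=
        sum_min_mul_heightIncr_le hx hactive hmono k
    _ = ∑ i ∈ shat, (∑ t, xhat t) i := by rw [hshat, hNhat]; simp only [hq]
    _ ≤ topSum (∑ t, xhat t) k := sum_le_topSum hcard

/-- **Lemma (Nestification).** Let `E ∈ E_{n,m,q}` be a sequence which, under its
water-filling allocation, has no inactive edges and online nodes arriving in
non-decreasing order of height. Then the induced nested sequence `Ê`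
(with `N̂_t = {i : t ≤ μ_i}`, i.e. `i ∈ N̂_t ↔ ∃ s ≥ t, i ∈ N_s`, and `q̂_t = q_t`)
satisfies `WF(E) ⪯ WF(Ê)`. -/
theorem nestification (n m : ℕ) (q : ℝ) (E : ReqSeq n m) (hEq : E ∈ seqs n m q)
    (x : Fin m → Fin n → ℝ) (hx : IsWFAlloc E x)
    (hactive : ∀ t, ∀ i ∈ E.N t, 0 < x t i)
    (hheights : ∀ t s : Fin m, t ≤ s → height x t ≤ height x s)
    (Ehat : ReqSeq n m)
    (hN : ∀ (t : Fin m) (i : Fin n), i ∈ Ehat.N t ↔ ∃ s : Fin m, t ≤ s ∧ i ∈ E.N s)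
    (hq : ∀ t, Ehat.q t = E.q t)
    (xhat : Fin m → Fin n → ℝ) (hxhat : IsWFAlloc Ehat xhat) :
    Majorizes (∑ t, xhat t) (∑ t, x t) :=
  nestification_general n m E x hx hactive hheights Ehat hN hq xhat hxhat
end
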